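/- arXiv:2505.04183 — 2 statements merged into one kernel-verified Lean document; each statement's English description precedes it below -/
import Mathlib

section
/- Let K ⊂ ℂ be a compact set and ν a finite positive measure on ℂ whose support is compactly contained in a ball B of radius R containing K. Define the logarithmic potential u_ν(z) := ∫_ℂ log|z − ζ| dν(ζ). Then for every 0 < ε ≤ 1/2 and every w ∈ ℂ with |w| ≤ ε, one has ∫_K |u_ν(z − w) − u_ν(z)| dLeb(z) ≤ −C ν(B) ε log ε, where C > 0 depends only on K and R. -/
/-!
For `a, b > 0` one has `|log a - log b| ≤ |a - b| (a⁻¹ + b⁻¹)`. With `a = |z - w - ζ|` and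
`b = |z - ζ|` this bounds `|log|z - w - ζ| - log|z - ζ||` by `|w|` times two translates of the
kernel `|u|⁻¹`, which is locally integrable because the plane is two-dimensional. Integrating
over `K × ν` and swapping the integrals (Tonelli) gives the bound
`2 |w| ν(B) ∫_{|u| < 2R + 1} |u|⁻¹`, which is even `O(ε)`, and `ε ≤ ε (-log ε) / log 2`.
The same Tonelli argument, with `|log t| ≤ t + t⁻¹`, shows that `ζ ↦ log|z - ζ|` is
`ν`-integrable for almost every `z`, so that the difference of the potentials is the integral
of the difference of the kernels.
-/

open MeasureTheory Metric
open scoped ENNReal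

noncomputable def logPotential (ν : Measure ℂ) (z : ℂ) : ℝ :=
  ∫ ζ, Real.log ‖z - ζ‖ ∂ν

namespace Real

theorem abs_log_sub_log_le {a b : ℝ} (ha : 0 < a) (hb : 0 < b) :
    |log a - log b| ≤ |a - b| * (a⁻¹ + b⁻¹) := by
  wlog hab : a ≤ b generalizing a b
  · rw [abs_sub_comm, abs_sub_comm a, add_comm]
    exact this hb ha (le_of_not_ge hab)
  have hlog : log b - log a ≤ (b - a) * a⁻¹ := by
    rw [← log_div hb.ne' ha.ne']
    calc log (b / a) ≤ b / a - 1 := log_le_sub_one_of_pos (by positivity)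
      _ = (b - a) * a⁻¹ := by field_simp
  rw [abs_sub_comm, abs_of_nonneg (sub_nonneg.2 (log_le_log ha hab)), abs_sub_comm,
    abs_of_nonneg (sub_nonneg.2 hab)]
  have : 0 ≤ (b - a) * b⁻¹ := mul_nonneg (sub_nonneg.2 hab) (by positivity)
  linarith [mul_add (b - a) a⁻¹ b⁻¹]

theorem log_two_le_neg_log {ε : ℝ} (hε : 0 < ε) (hε2 : ε ≤ 1 / 2) : log 2 ≤ -log ε := by
  rw [← log_inv]
  exact log_le_log two_pos (by rw [le_inv_comm₀ two_pos hε]; linarith)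

theorem abs_log_le_self_add_inv {t : ℝ} (ht : 0 < t) : |log t| ≤ t + t⁻¹ := by
  have hinv := log_le_self (inv_nonneg.2 ht.le)
  rw [log_inv] at hinv
  rw [abs_le]
  constructor <;> linarith [log_le_self ht.le, inv_pos.2 ht]

end Real

section NormKernel

variable {E : Type*} [SeminormedAddCommGroup E]

theorem enorm_log_norm_le (u : E) : ‖Real.log ‖u‖‖ₑ ≤ ‖u‖ₑ + ‖u‖ₑ⁻¹ := by
  rcases (norm_nonneg u).eq_or_lt with hu | hu
  · simp [← hu]
  rw [Real.enorm_eq_ofReal_abs, ← ofReal_norm, ← ENNReal.ofReal_inv_of_pos hu,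
    ← ENNReal.ofReal_add hu.le (by positivity)]
  exact ENNReal.ofReal_le_ofReal (Real.abs_log_le_self_add_inv hu)

theorem enorm_log_norm_sub_log_norm_le (u v : E) :
    ‖Real.log ‖u‖ - Real.log ‖v‖‖ₑ ≤ ‖u - v‖ₑ * (‖u‖ₑ⁻¹ + ‖v‖ₑ⁻¹) := by
  rcases eq_or_ne ‖u‖ ‖v‖ with huv | huv
  · simp [huv]
  have hsub : ‖u - v‖ₑ ≠ 0 := by
    rw [← ofReal_norm]
    exact (ENNReal.ofReal_pos.2 <|
      (abs_pos.2 (sub_ne_zero.2 huv)).trans_le (abs_norm_sub_norm_le u v)).ne'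
  rcases (norm_nonneg u).eq_or_lt with hu | hu
  · have : ‖u‖ₑ = 0 := by rw [← ofReal_norm, ← hu, ENNReal.ofReal_zero]
    simp [this, ENNReal.mul_top hsub]
  rcases (norm_nonneg v).eq_or_lt with hv | hv
  · have : ‖v‖ₑ = 0 := by rw [← ofReal_norm, ← hv, ENNReal.ofReal_zero]
    simp [this, ENNReal.mul_top hsub]
  rw [Real.enorm_eq_ofReal_abs, ← ofReal_norm, ← ofReal_norm, ← ofReal_norm,
    ← ENNReal.ofReal_inv_of_pos hu, ← ENNReal.ofReal_inv_of_pos hv,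
    ← ENNReal.ofReal_add (by positivity) (by positivity), ← ENNReal.ofReal_mul (norm_nonneg _)]
  refine ENNReal.ofReal_le_ofReal ((Real.abs_log_sub_log_le hu hv).trans ?_)
  gcongr
  exact abs_norm_sub_norm_le u v

end NormKernel

section Translation

variable {E : Type*} [NormedAddCommGroup E] [MeasurableSpace E] [BorelSpace E]
  (μ : Measure E) [μ.IsAddRightInvariant]

theorem setLIntegral_ball_comp_sub_le (f : E → ℝ≥0∞) {c a : E} {r ρ : ℝ} (ha : dist a c ≤ ρ) :
    ∫⁻ z in ball c r, f (z - a) ∂μ ≤ ∫⁻ u in ball 0 (r + ρ), f u ∂μ := by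
  have hpre : (· - a) ⁻¹' ball (c - a) r = ball c r := by
    ext z; simp
  calc ∫⁻ z in ball c r, f (z - a) ∂μ = ∫⁻ u in ball (c - a) r, f u ∂μ := by
        rw [← hpre]
        exact (measurePreserving_sub_right μ a).setLIntegral_comp_preimage_emb
          (MeasurableEquiv.subRight a).measurableEmbedding f _
    _ ≤ ∫⁻ u in ball 0 (r + ρ), f u ∂μ := by
        refine lintegral_mono_set (ball_subset_ball' ?_)
        rw [dist_zero_right, ← dist_eq_norm, dist_comm]
        linarith

variable [SecondCountableTopology E] [SFinite μ]

theorem lintegral_ball_lintegral_comp_sub_le {ν : Measure E} [SFinite ν] {f : E → ℝ≥0∞}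
    (hf : Measurable f) {c a : E} {R ρ : ℝ} (hν : ν (ball c R)ᶜ = 0) (ha : ‖a‖ ≤ ρ) :
    ∫⁻ z in ball c R, ∫⁻ ζ, f (z - a - ζ) ∂ν ∂μ ≤
      ν Set.univ * ∫⁻ u in ball 0 (2 * R + ρ), f u ∂μ := by
  have hmeas : Measurable fun p : E × E => f (p.1 - a - p.2) := by fun_prop
  rw [lintegral_lintegral_swap hmeas.aemeasurable, mul_comm, ← lintegral_const]
  refine lintegral_mono_ae ?_
  filter_upwards [mem_ae_iff.2 hν] with ζ hζ
  simp_rw [sub_sub]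
  rw [show 2 * R + ρ = R + (R + ρ) by ring]
  refine setLIntegral_ball_comp_sub_le μ f ?_
  calc dist (a + ζ) c ≤ ‖a‖ + dist ζ c := by
        rw [dist_eq_norm, dist_eq_norm, add_sub_assoc]; exact norm_add_le _ _
    _ ≤ R + ρ := by rw [mem_ball] at hζ; linarith

end Translation

section HaarKernel

variable {E : Type*} [NormedAddCommGroup E] [NormedSpace ℝ E] [FiniteDimensional ℝ E]
  [MeasurableSpace E] [BorelSpace E] (μ : Measure E) [μ.IsAddHaarMeasure]

theorem setLIntegral_ball_enorm_inv_lt_top (hd : 1 < Module.finrank ℝ E) (r : ℝ) :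
    ∫⁻ u in ball (0 : E) r, ‖u‖ₑ⁻¹ ∂μ < ∞ := by
  have : Nontrivial E := Module.nontrivial_of_finrank_pos (R := ℝ) (by omega)
  have hint : IntegrableOn (fun u : E => ‖u‖⁻¹) (ball 0 r) μ :=
    integrableOn_ball_of_norm_le_rpow (C := 1) (α := 1) hd.le (by exact_mod_cast hd)
      (Filter.Eventually.of_forall fun u => by simp [Real.rpow_neg_one]) (by fun_prop)
  refine lt_of_eq_of_lt (lintegral_congr_ae ?_) hint.hasFiniteIntegral
  filter_upwards [ae_restrict_of_ae (μ.ae_ne 0)] with u hu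
  rw [enorm_inv (norm_ne_zero_iff.2 hu), enorm_norm]

theorem setLIntegral_ball_enorm_add_enorm_inv_lt_top (hd : 1 < Module.finrank ℝ E) (r : ℝ) :
    ∫⁻ u in ball (0 : E) r, (‖u‖ₑ + ‖u‖ₑ⁻¹) ∂μ < ∞ := by
  rw [lintegral_add_left (by fun_prop)]
  refine ENNReal.add_lt_top.2 ⟨?_, setLIntegral_ball_enorm_inv_lt_top μ hd r⟩
  simpa only [HasFiniteIntegral, enorm_norm] using
    ((continuous_norm.locallyIntegrable.integrableOn_isCompact (μ := μ)
      (isCompact_closedBall (0 : E) r)).mono_set ball_subset_closedBall).hasFiniteIntegral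

end HaarKernel

section LogPotential

variable {ν : Measure ℂ} [IsFiniteMeasure ν] {c : ℂ} {R : ℝ}

theorem ae_integrable_log_norm_sub (hν : ν (ball c R)ᶜ = 0) (a : ℂ) :
    ∀ᵐ z ∂volume.restrict (ball c R), Integrable (fun ζ => Real.log ‖z - a - ζ‖) ν := by
  have hmeas : Measurable fun p : ℂ × ℂ => ‖Real.log ‖p.1 - a - p.2‖‖ₑ :=
    (Real.measurable_log.comp (by fun_prop)).enorm
  have hfin : ∫⁻ z in ball c R, ∫⁻ ζ, ‖Real.log ‖z - a - ζ‖‖ₑ ∂ν ≠ ∞ := by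
    refine ne_top_of_le_ne_top ?_ (lintegral_mono fun z => lintegral_mono fun ζ =>
      enorm_log_norm_le (z - a - ζ))
    refine ne_top_of_le_ne_top ?_ (lintegral_ball_lintegral_comp_sub_le volume
      (f := fun u => ‖u‖ₑ + ‖u‖ₑ⁻¹) (by fun_prop) hν le_rfl)
    exact ENNReal.mul_ne_top (measure_ne_top ν _)
      (setLIntegral_ball_enorm_add_enorm_inv_lt_top volume (by simp) _).ne
  filter_upwards [ae_lt_top' hmeas.lintegral_prod_right'.aemeasurable hfin] with z hz
  exact ⟨(Real.measurable_log.comp (by fun_prop)).aestronglyMeasurable, hz⟩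

-- `z - 0 - ζ` rather than `z - ζ`: both kernels are then instances of `f (z - a - ζ)`.
theorem ae_logPotential_sub_eq_integral (hν : ν (ball c R)ᶜ = 0) (w : ℂ) :
    ∀ᵐ z ∂volume.restrict (ball c R), logPotential ν (z - w) - logPotential ν z =
      ∫ ζ, (Real.log ‖z - w - ζ‖ - Real.log ‖z - 0 - ζ‖) ∂ν := by
  filter_upwards [ae_integrable_log_norm_sub hν w, ae_integrable_log_norm_sub hν 0]
    with z hw h0
  rw [integral_sub hw h0, sub_zero]
  rfl

theorem lintegral_enorm_logPotential_sub_le (hν : ν (ball c R)ᶜ = 0) {K : Set ℂ}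
    (hK : K ⊆ ball c R) {w : ℂ} (hw : ‖w‖ ≤ 1) :
    ∫⁻ z in K, ‖logPotential ν (z - w) - logPotential ν z‖ₑ ≤
      ‖w‖ₑ * (2 * ν Set.univ * ∫⁻ u in ball (0 : ℂ) (2 * R + 1), ‖u‖ₑ⁻¹) := by
  have hkernel : ∀ z : ℂ, ∫⁻ ζ, ‖Real.log ‖z - w - ζ‖ - Real.log ‖z - 0 - ζ‖‖ₑ ∂ν ≤
      ‖w‖ₑ * (∫⁻ ζ, ‖z - w - ζ‖ₑ⁻¹ ∂ν + ∫⁻ ζ, ‖z - 0 - ζ‖ₑ⁻¹ ∂ν) := by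
    intro z
    rw [← lintegral_add_left (by fun_prop), ← lintegral_const_mul _ (by fun_prop)]
    refine lintegral_mono fun ζ => (enorm_log_norm_sub_log_norm_le _ _).trans_eq ?_
    rw [show z - w - ζ - (z - 0 - ζ) = -w by abel, enorm_neg]
  calc ∫⁻ z in K, ‖logPotential ν (z - w) - logPotential ν z‖ₑ
      ≤ ∫⁻ z in ball c R, ‖logPotential ν (z - w) - logPotential ν z‖ₑ :=
        lintegral_mono_set hK
    _ ≤ ∫⁻ z in ball c R, ∫⁻ ζ, ‖Real.log ‖z - w - ζ‖ - Real.log ‖z - 0 - ζ‖‖ₑ ∂ν := by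
        refine lintegral_mono_ae ?_
        filter_upwards [ae_logPotential_sub_eq_integral hν w] with z hz
        rw [hz]
        exact enorm_integral_le_lintegral_enorm _
    _ ≤ ∫⁻ z in ball c R, ‖w‖ₑ * (∫⁻ ζ, ‖z - w - ζ‖ₑ⁻¹ ∂ν + ∫⁻ ζ, ‖z - 0 - ζ‖ₑ⁻¹ ∂ν) :=
        lintegral_mono hkernel
    _ = ‖w‖ₑ * ((∫⁻ z in ball c R, ∫⁻ ζ, ‖z - w - ζ‖ₑ⁻¹ ∂ν) +
          ∫⁻ z in ball c R, ∫⁻ ζ, ‖z - 0 - ζ‖ₑ⁻¹ ∂ν) := by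
        rw [lintegral_const_mul _ (by fun_prop), lintegral_add_left (by fun_prop)]
    _ ≤ _ := by
        rw [two_mul, add_mul]
        gcongr <;> exact lintegral_ball_lintegral_comp_sub_le volume
          (f := fun u => ‖u‖ₑ⁻¹) (by fun_prop) hν (by simp [hw])

end LogPotential

theorem logPotential_translate_estimate_general (K : Set ℂ) (R : ℝ) :
    ∃ C : ℝ, 0 < C ∧
      ∀ (c : ℂ) (ν : Measure ℂ), IsFiniteMeasure ν →
        K ⊆ Metric.ball c R →
        (∃ K' : Set ℂ, IsCompact K' ∧ K' ⊆ Metric.ball c R ∧ ν K'ᶜ = 0) →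
        ∀ ε : ℝ, 0 < ε → ε ≤ 1 / 2 →
          ∀ w : ℂ, ‖w‖ ≤ ε →
            (∫ z in K, |logPotential ν (z - w) - logPotential ν z|) ≤
              C * (ν (Metric.ball c R)).toReal * (ε * (-Real.log ε)) := by
  set I := ∫⁻ u in ball (0 : ℂ) (2 * R + 1), ‖u‖ₑ⁻¹
  have hI : I ≠ ∞ := (setLIntegral_ball_enorm_inv_lt_top volume (by simp) _).ne
  have hlog2 : 0 < Real.log 2 := Real.log_pos one_lt_two
  refine ⟨2 * I.toReal / Real.log 2 + 1, by positivity, ?_⟩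
  rintro c ν hν hKB ⟨K', -, hK'B, hνK'⟩ ε hε hε2 w hw
  have hνB : ν (ball c R)ᶜ = 0 := measure_mono_null (Set.compl_subset_compl.2 hK'B) hνK'
  have hest := lintegral_enorm_logPotential_sub_le hνB hKB (hw.trans (by linarith))
  rw [← measure_congr (ae_eq_univ.2 hνB)] at hest
  have hconst : 2 * I.toReal ≤ (2 * I.toReal / Real.log 2 + 1) * -Real.log ε := by
    calc 2 * I.toReal = 2 * I.toReal / Real.log 2 * Real.log 2 := by field_simp
      _ ≤ (2 * I.toReal / Real.log 2 + 1) * -Real.log ε := by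
        gcongr <;> linarith [Real.log_two_le_neg_log hε hε2]
  set V := (ν (ball c R)).toReal
  calc ∫ z in K, |logPotential ν (z - w) - logPotential ν z|
      ≤ ‖∫ z in K, |logPotential ν (z - w) - logPotential ν z|‖ₑ.toReal := by
        rw [toReal_enorm, Real.norm_eq_abs]; exact le_abs_self _
    _ ≤ (‖w‖ₑ * (2 * ν (ball c R) * I)).toReal :=
        ENNReal.toReal_mono (by finiteness)
          ((enorm_integral_le_lintegral_enorm _).trans (by simpa using hest))
    _ = ‖w‖ * (V * (2 * I.toReal)) := by
        simp only [V, ENNReal.toReal_mul, toReal_enorm, ENNReal.toReal_ofNat]; ring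
    _ ≤ ε * (V * ((2 * I.toReal / Real.log 2 + 1) * -Real.log ε)) := by gcongr
    _ = (2 * I.toReal / Real.log 2 + 1) * V * (ε * -Real.log ε) := by ring

/-- **Step 1 of Lemma 2.2**: let `K ⊂ ℂ` be compact and `ν` a finite positive measure
whose support is compactly contained in a ball `B` of radius `R` containing `K`.
Then for every `0 < ε ≤ 1/2` and every `w ∈ ℂ` with `|w| ≤ ε`,
`∫_K |u_ν(z − w) − u_ν(z)| dLeb(z) ≤ −C ν(B) ε log ε`, where `C > 0` depends only
on `K` and `R`. -/
theorem logPotential_translate_estimate (K : Set ℂ) (hK : IsCompact K) (R : ℝ) (hR : 0 < R) :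
    ∃ C : ℝ, 0 < C ∧
      ∀ (c : ℂ) (ν : Measure ℂ), IsFiniteMeasure ν →
        K ⊆ Metric.ball c R →
        (∃ K' : Set ℂ, IsCompact K' ∧ K' ⊆ Metric.ball c R ∧ ν K'ᶜ = 0) →
        ∀ ε : ℝ, 0 < ε → ε ≤ 1 / 2 →
          ∀ w : ℂ, ‖w‖ ≤ ε →
            (∫ z in K, |logPotential ν (z - w) - logPotential ν z|) ≤
              C * (ν (Metric.ball c R)).toReal * (ε * (-Real.log ε)) :=
  logPotential_translate_estimate_general K R
end

section
/- For every compact set K ⊂ ℂ there is a constant C > 0, depending only on K, such that for every 0 < ε ≤ 1/2 one has ∫_K |log|z − ε| − log|z|| dLeb(z) ≤ −C ε log ε. -/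
/-!
By the mean value inequality `|log a - log b| ≤ |a - b| (a⁻¹ + b⁻¹)`, the integrand is at most
`ε (‖z - ε‖⁻¹ + ‖z‖⁻¹)`. In the plane `‖z‖⁻¹` is locally integrable (its singularity has order
`1 < 2 = dim`), so both integrals are bounded by one integral of `‖z‖⁻¹` over a ball containing
`K` and all its small translates. The resulting bound `O(ε)` is even better than `O(ε |log ε|)`.
-/

open MeasureTheory Metric Module

theorem Real.abs_log_sub_log_le_s6 {a b : ℝ} (ha : 0 < a) (hb : 0 < b) :
    |Real.log a - Real.log b| ≤ |a - b| * (a⁻¹ + b⁻¹) := by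
  rw [← Real.log_div ha.ne' hb.ne']
  have hab : 0 < a / b := div_pos ha hb
  have upper : Real.log (a / b) ≤ (a - b) * b⁻¹ := by
    have := Real.log_le_sub_one_of_pos hab
    rwa [div_sub_one hb.ne', div_eq_mul_inv] at this
  have lower : (a - b) * a⁻¹ ≤ Real.log (a / b) := by
    have := Real.one_sub_inv_le_log_of_pos hab
    rwa [inv_div, one_sub_div ha.ne', div_eq_mul_inv] at this
  have hia := inv_pos.2 ha
  have hib := inv_pos.2 hb
  rw [abs_le]
  constructor <;> nlinarith [le_abs_self (a - b), neg_abs_le (a - b), abs_nonneg (a - b)]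

theorem abs_log_norm_sub_sub_log_norm_le {E : Type*} [SeminormedAddCommGroup E] {z w : E}
    (hz : ‖z‖ ≠ 0) (hzw : ‖z - w‖ ≠ 0) :
    |Real.log ‖z - w‖ - Real.log ‖z‖| ≤ ‖w‖ * (‖z - w‖⁻¹ + ‖z‖⁻¹) := by
  calc |Real.log ‖z - w‖ - Real.log ‖z‖|
      ≤ |‖z - w‖ - ‖z‖| * (‖z - w‖⁻¹ + ‖z‖⁻¹) :=
        Real.abs_log_sub_log_le_s6 (lt_of_le_of_ne (norm_nonneg _) hzw.symm)
          (lt_of_le_of_ne (norm_nonneg _) hz.symm)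
    _ ≤ ‖w‖ * (‖z - w‖⁻¹ + ‖z‖⁻¹) := by
        gcongr
        simpa using abs_norm_sub_norm_le (z - w) z

section Translation

variable {G : Type*} [MeasurableSpace G] [AddGroup G] [MeasurableAdd G] {μ : Measure G}
  [μ.IsAddRightInvariant] {f : G → ℝ} {S K : Set G} {w : G}

theorem MeasureTheory.IntegrableOn.comp_sub_right_of_subset (hf : IntegrableOn f S μ)
    (hKS : K ⊆ (· - w) ⁻¹' S) : IntegrableOn (fun x ↦ f (x - w)) K μ :=
  (((measurePreserving_sub_right μ w).integrableOn_comp_preimage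
    (MeasurableEquiv.subRight w).measurableEmbedding).2 hf).mono_set hKS

theorem setIntegral_comp_sub_right_le (hf₀ : 0 ≤ f) (hf : IntegrableOn f S μ)
    (hKS : K ⊆ (· - w) ⁻¹' S) : ∫ x in K, f (x - w) ∂μ ≤ ∫ x in S, f x ∂μ :=
  calc ∫ x in K, f (x - w) ∂μ ≤ ∫ x in (· - w) ⁻¹' S, f (x - w) ∂μ :=
        setIntegral_mono_set (hf.comp_sub_right_of_subset subset_rfl)
          (.of_forall fun x ↦ hf₀ (x - w)) hKS.eventuallyLE
    _ = ∫ x in S, f x ∂μ :=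
        (measurePreserving_sub_right μ w).setIntegral_preimage_emb
          (MeasurableEquiv.subRight w).measurableEmbedding f S

end Translation

section FiniteDimensional

variable {E : Type*} [NormedAddCommGroup E] [NormedSpace ℝ E] [FiniteDimensional ℝ E]
  [MeasurableSpace E] [BorelSpace E] {μ : Measure E} [μ.IsAddHaarMeasure]

theorem locallyIntegrable_inv_norm (hd : 2 ≤ finrank ℝ E) :
    LocallyIntegrable (fun x : E ↦ ‖x‖⁻¹) μ := by
  refine locallyIntegrable_of_norm_le_rpow (C := 1) (α := 1) (by omega) (by exact_mod_cast hd)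
    (.of_forall fun x ↦ ?_) (continuous_norm.measurable.inv.aestronglyMeasurable)
  simp [Real.rpow_neg_one]

theorem exists_integral_abs_log_norm_sub_le (hd : 2 ≤ finrank ℝ E) {K : Set E}
    (hK : IsCompact K) :
    ∃ M, ∀ w : E, ‖w‖ ≤ 1 →
      ∫ z in K, |Real.log ‖z - w‖ - Real.log ‖z‖| ∂μ ≤ M * ‖w‖ := by
  have : Nontrivial E := Module.nontrivial_of_finrank_pos (R := ℝ) (by omega)
  obtain ⟨R, hR⟩ := hK.isBounded.subset_closedBall 0
  set S := closedBall (0 : E) (R + 1)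
  have hS : IntegrableOn (fun z : E ↦ ‖z‖⁻¹) S μ :=
    (locallyIntegrable_inv_norm hd).integrableOn_isCompact (isCompact_closedBall _ _)
  have hKS : ∀ v : E, ‖v‖ ≤ 1 → K ⊆ (· - v) ⁻¹' S := fun v hv z hz ↦ by
    have := mem_closedBall_zero_iff.1 (hR hz)
    simp only [Set.mem_preimage, S, mem_closedBall_zero_iff]
    linarith [norm_sub_le z v]
  set I := ∫ z in S, ‖z‖⁻¹ ∂μ
  have hint : ∀ v : E, ‖v‖ ≤ 1 → IntegrableOn (fun z ↦ ‖z - v‖⁻¹) K μ :=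
    fun v hv ↦ hS.comp_sub_right_of_subset (hKS v hv)
  have hbound : ∀ v : E, ‖v‖ ≤ 1 → ∫ z in K, ‖z - v‖⁻¹ ∂μ ≤ I :=
    fun v hv ↦ setIntegral_comp_sub_right_le (fun z ↦ inv_nonneg.2 (norm_nonneg z)) hS (hKS v hv)
  have hint₀ : IntegrableOn (fun z ↦ ‖z‖⁻¹) K μ := by simpa using hint 0 (by simp)
  have hbound₀ : ∫ z in K, ‖z‖⁻¹ ∂μ ≤ I := by simpa using hbound 0 (by simp)
  refine ⟨2 * I, fun w hw ↦ ?_⟩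
  have hpointwise : ∀ᵐ z ∂μ.restrict K,
      |Real.log ‖z - w‖ - Real.log ‖z‖| ≤ ‖w‖ * (‖z - w‖⁻¹ + ‖z‖⁻¹) := by
    filter_upwards [ae_restrict_of_ae (μ.ae_ne 0), ae_restrict_of_ae (μ.ae_ne w)] with z h0 hw
    exact abs_log_norm_sub_sub_log_norm_le (norm_ne_zero_iff.2 h0)
      (norm_ne_zero_iff.2 (sub_ne_zero.2 hw))
  calc ∫ z in K, |Real.log ‖z - w‖ - Real.log ‖z‖| ∂μ
      ≤ ∫ z in K, ‖w‖ * (‖z - w‖⁻¹ + ‖z‖⁻¹) ∂μ :=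
        integral_mono_of_nonneg (.of_forall fun _ ↦ abs_nonneg _)
          (((hint w hw).add hint₀).const_mul _) hpointwise
    _ = ‖w‖ * (∫ z in K, ‖z - w‖⁻¹ ∂μ + ∫ z in K, ‖z‖⁻¹ ∂μ) := by
        rw [integral_const_mul, integral_add (hint w hw) hint₀]
    _ ≤ ‖w‖ * (I + I) :=
        mul_le_mul_of_nonneg_left (add_le_add (hbound w hw) hbound₀) (norm_nonneg w)
    _ = 2 * I * ‖w‖ := by ring

end FiniteDimensional

theorem Real.log_two_le_neg_log_s6 {ε : ℝ} (hε : 0 < ε) (hε₂ : ε ≤ 1 / 2) :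
    Real.log 2 ≤ -Real.log ε := by
  rw [← Real.log_inv]
  exact Real.log_le_log (by norm_num) (by rw [le_inv_comm₀ (by norm_num) hε]; linarith)

/-- **Step 1, inner estimate (Lemma 2.2)**: for every compact set `K ⊂ ℂ` there is a
constant `C > 0`, depending only on `K`, such that for every `0 < ε ≤ 1/2` one has
`∫_K |log|z − ε| − log|z|| dLeb(z) ≤ −C ε log ε`. -/
theorem integral_log_translate_estimate (K : Set ℂ) (hK : IsCompact K) :
    ∃ C : ℝ, 0 < C ∧
      ∀ ε : ℝ, 0 < ε → ε ≤ 1 / 2 →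
        (∫ z in K, |Real.log ‖z - (ε : ℂ)‖ - Real.log ‖z‖|) ≤
          C * (ε * (-Real.log ε)) := by
  obtain ⟨M, hM⟩ := exists_integral_abs_log_norm_sub_le (μ := volume)
    Complex.finrank_real_complex.ge hK
  have hlog2 : 0 < Real.log 2 := Real.log_pos one_lt_two
  refine ⟨max M 1 / Real.log 2, by positivity, fun ε hε hε₂ ↦ ?_⟩
  have hnorm : ‖(ε : ℂ)‖ = ε := by simp [hε.le]
  calc ∫ z in K, |Real.log ‖z - (ε : ℂ)‖ - Real.log ‖z‖|
      ≤ M * ε := by simpa only [hnorm] using hM ε (by rw [hnorm]; linarith)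
    _ ≤ max M 1 * ε := by gcongr; exact le_max_left _ _
    _ = max M 1 / Real.log 2 * (ε * Real.log 2) := by field_simp
    _ ≤ max M 1 / Real.log 2 * (ε * (-Real.log ε)) := by
        gcongr; exact Real.log_two_le_neg_log_s6 hε hε₂
end
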